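/- If Δ is a local automorphism of μ1, then the matrix block Δ_{1,1} of Δ with respect to the basis (e_1,…,e_{n−2k}) is lower triangular, i.e., the e_j-coefficient of Δ(e_i) vanishes whenever j < i (for 1 ≤ i, j ≤ n−2k); moreover the f_j-coefficient of Δ(e_i) vanishes for all 3 ≤ i ≤ n−2k and 1 ≤ j ≤ 2k. -/
import Mathlib


/-- Underlying space of the `p`-filiform Leibniz algebra `μ₁`:
`e`-part has `m + 4 = n - 2k` coordinates, `f`-part has `2(k+1)` coordinates
(so the paper's `k ≥ 1` is `k + 1` here, and `n = (m + 4) + 2(k + 1) ≥ 2k + 4`). -/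
abbrev MuV (m k : ℕ) (K : Type*) := (Fin (m + 4) → K) × (Fin (2 * (k + 1)) → K)

variable {K : Type*} [Field K]

/-- Basis vector `e_{i+1}` (0-indexed). -/
def eb (K : Type*) [Field K] (m k : ℕ) (i : Fin (m + 4)) : MuV m k K := (Pi.single i 1, 0)

/-- Basis vector `f_{j+1}` (0-indexed). -/
def fb (K : Type*) [Field K] (m k : ℕ) (j : Fin (2 * (k + 1))) : MuV m k K := (0, Pi.single j 1)

/-- The bracket of `μ₁`: `[e_i, e_1] = e_{i+1}` for `1 ≤ i ≤ n - 2k - 1` and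
`[e_1, f_j] = f_{k+j}` for `1 ≤ j ≤ k` (paper indexing), all other products zero. -/
def mu1Br (K : Type*) [Field K] (m k : ℕ) (x y : MuV m k K) : MuV m k K :=
  (fun i => if 1 ≤ (i : ℕ) then
      x.1 ⟨(i : ℕ) - 1, lt_of_le_of_lt (Nat.sub_le _ _) i.isLt⟩ * y.1 ⟨0, Nat.succ_pos _⟩
    else 0,
   fun j => if k + 1 ≤ (j : ℕ) then
      x.1 ⟨0, Nat.succ_pos _⟩ * y.2 ⟨(j : ℕ) - (k + 1), lt_of_le_of_lt (Nat.sub_le _ _) j.isLt⟩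
    else 0)

/-- `φ` is an automorphism of `μ₁`. -/
def IsMu1Aut (m k : ℕ) (φ : MuV m k K →ₗ[K] MuV m k K) : Prop :=
  Function.Bijective φ ∧ ∀ x y, φ (mu1Br K m k x y) = mu1Br K m k (φ x) (φ y)

/-- `Δ` is a local automorphism of `μ₁`. -/
def IsMu1LocAut (m k : ℕ) (Δ : MuV m k K →ₗ[K] MuV m k K) : Prop :=
  ∀ x, ∃ φ : MuV m k K →ₗ[K] MuV m k K, IsMu1Aut m k φ ∧ Δ x = φ x


lemma br_eb (m k : ℕ) (i : ℕ) (h : i + 1 < m + 4) :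
    mu1Br K m k (eb K m k ⟨i, by omega⟩) (eb K m k ⟨0, by omega⟩) = eb K m k ⟨i+1, h⟩ := by
  unfold mu1Br eb
  refine Prod.ext ?_ ?_
  · funext i'
    simp only [Pi.single_apply, Fin.ext_iff]
    by_cases h1 : 1 ≤ (i' : ℕ)
    · rw [if_pos h1]

      by_cases h2 : (i' : ℕ) - 1 = i
      · rw [if_pos h2, if_pos trivial, if_pos (show (i' : ℕ) = i + 1 by omega)]; ring
      · rw [if_neg h2, if_neg (show ¬ (i' : ℕ) = i + 1 by omega), zero_mul]
    · rw [if_neg h1, if_neg (by omega)]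
  · funext j
    simp only
    by_cases h1 : k + 1 ≤ (j : ℕ)
    · rw [if_pos h1]; simp
    · rw [if_neg h1]; simp

lemma aut_eb (m k : ℕ) (φ : MuV m k K →ₗ[K] MuV m k K)
    (hφ : ∀ x y, φ (mu1Br K m k x y) = mu1Br K m k (φ x) (φ y)) :
    ∀ (i : ℕ) (h : i < m + 4), 1 ≤ i →
      (∀ j : Fin (m + 4), (j : ℕ) < i → (φ (eb K m k ⟨i, h⟩)).1 j = 0) ∧
      (2 ≤ i → ∀ j : Fin (2*(k+1)), (φ (eb K m k ⟨i, h⟩)).2 j = 0) := by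
  intro i
  induction i with
  | zero => intro h h1; omega
  | succ n ih =>
    intro h _
    have hb : φ (eb K m k ⟨n+1, h⟩)
        = mu1Br K m k (φ (eb K m k ⟨n, by omega⟩)) (φ (eb K m k ⟨0, by omega⟩)) := by
      rw [← hφ, br_eb]
    constructor
    · intro j hj
      rw [hb]
      show (if 1 ≤ (j : ℕ) then _ else 0) = 0
      by_cases h1 : 1 ≤ (j : ℕ)
      · rw [if_pos h1]
        have hn : 1 ≤ n := by omega
        have := (ih (by omega) hn).1 ⟨(j : ℕ) - 1, by omega⟩ (show (j : ℕ) - 1 < n by omega)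
        rw [this, zero_mul]
      · rw [if_neg h1]
    · intro h2 j
      rw [hb]
      show (if k + 1 ≤ (j : ℕ) then _ else 0) = 0
      by_cases h1 : k + 1 ≤ (j : ℕ)
      · rw [if_pos h1]
        have := (ih (by omega) (by omega)).1 ⟨0, by omega⟩ (show (0 : ℕ) < n by omega)
        rw [this, zero_mul]
      · rw [if_neg h1]

/-- If `Δ` is a local automorphism of `μ₁`, then its `(1,1)`-block with respect to
the basis `e_1, …, e_{n-2k}` is lower triangular, and the `f_j`-coefficient of
`Δ(e_i)` vanishes for `3 ≤ i ≤ n - 2k`. -/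
theorem stmt14 (K : Type*) [Field K] [CharZero K] [IsAlgClosed K] (m k : ℕ)
    (Δ : MuV m k K →ₗ[K] MuV m k K) (hΔ : IsMu1LocAut m k Δ) :
    (∀ i j : Fin (m + 4), (j : ℕ) < (i : ℕ) → (Δ (eb K m k i)).1 j = 0) ∧
    (∀ i : Fin (m + 4), 2 ≤ (i : ℕ) → ∀ j : Fin (2 * (k + 1)),
      (Δ (eb K m k i)).2 j = 0) := by
  constructor
  · intro i j hj
    obtain ⟨φ, ⟨_, hmul⟩, heq⟩ := hΔ (eb K m k i)
    rw [heq]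
    have h1 : 1 ≤ (i : ℕ) := by omega
    have := (aut_eb m k φ hmul (i : ℕ) i.isLt h1).1 j hj
    simpa using this
  · intro i h2 j
    obtain ⟨φ, ⟨_, hmul⟩, heq⟩ := hΔ (eb K m k i)
    rw [heq]
    have := (aut_eb m k φ hmul (i : ℕ) i.isLt (by omega)).2 h2 j
    simpa using this
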